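/- arXiv:0711.0986 — 2 statements merged into one kernel-verified Lean document; each statement's English description precedes it below -/
import Mathlib

section
/- Let μ and ν be probability measures on X^n and Y^n respectively (X, Y finite sets), and let μ⊗ν denote their product measure on (X×Y)^n, viewing a sequence over X×Y as a pair of sequences. Then for all 1 ≤ i < j ≤ n: max{η̄_{ij}(μ), η̄_{ij}(ν)} ≤ η̄_{ij}(μ⊗ν). -/
open scoped BigOperators

/-- Probability (under `μ`) of the event that the first `i` coordinates agree with `z`. -/
noncomputable def prefProb {n : ℕ} {Ω : Type*} [Fintype Ω] [DecidableEq Ω] (μ : (Fin n → Ω) → ℝ) (i : ℕ)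
    (z : Fin n → Ω) : ℝ :=
  ∑ x : Fin n → Ω, if ∀ t : Fin n, (t : ℕ) < i → x t = z t then μ x else 0

/-- Conditional probability that the suffix `X_j,…,X_n` (1-based `j`) equals `s`,
given that the first `i` coordinates agree with `z`. -/
noncomputable def condSuffix {n : ℕ} {Ω : Type*} [Fintype Ω] [DecidableEq Ω]
    (μ : (Fin n → Ω) → ℝ) (i j : ℕ) (z : Fin n → Ω)
    (s : {t : Fin n // j ≤ (t : ℕ) + 1} → Ω) : ℝ :=
  (∑ x : Fin n → Ω,
      if (∀ t : Fin n, (t : ℕ) < i → x t = z t) ∧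
          (∀ t : {t : Fin n // j ≤ (t : ℕ) + 1}, x t.1 = s t)
        then μ x else 0) / prefProb μ i z

/-- Replace the `i`-th (1-based) coordinate of `y` by `w` (this encodes the prefix `yw`). -/
def setCoord {n : ℕ} {Ω : Type*} (y : Fin n → Ω) (i : ℕ) (w : Ω) : Fin n → Ω :=
  fun t => if (t : ℕ) + 1 = i then w else y t

/-- `η_{ij}(μ; y, w, w')`: total variation distance between the conditional laws of
`X_j,…,X_n` given the prefixes `yw` and `yw'`. -/
noncomputable def eta {n : ℕ} {Ω : Type*} [Fintype Ω] [DecidableEq Ω]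
    (μ : (Fin n → Ω) → ℝ) (i j : ℕ) (y : Fin n → Ω) (w w' : Ω) : ℝ :=
  (1 / 2) * ∑ s : {t : Fin n // j ≤ (t : ℕ) + 1} → Ω,
    |condSuffix μ i j (setCoord y i w) s - condSuffix μ i j (setCoord y i w') s|

/-- `η̄_{ij}(μ)`: the η-mixing coefficient. -/
noncomputable def etaBar {n : ℕ} {Ω : Type*} [Fintype Ω] [DecidableEq Ω]
    (μ : (Fin n → Ω) → ℝ) (i j : ℕ) : ℝ :=
  ⨆ y : Fin n → Ω, ⨆ w : Ω, ⨆ w' : Ω, eta μ i j y w w'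

/-- `μ` is a probability mass function. -/
def IsProbMeas {α : Type*} [Fintype α] (μ : α → ℝ) : Prop :=
  (∀ x, 0 ≤ μ x) ∧ ∑ x, μ x = 1

/-- The parallel product of measures `μ` on `X^n` and `ν` on `Y^n`, as a measure on
`(X × Y)^n`, viewing a sequence over `X × Y` as a pair of sequences. -/
def parProd {n : ℕ} {X Y : Type*} (μ : (Fin n → X) → ℝ) (ν : (Fin n → Y) → ℝ) :
    (Fin n → X × Y) → ℝ :=
  fun z => μ (fun t => (z t).1) * ν (fun t => (z t).2)

/-! Conditioned on a prefix of pairs, the law of the suffix under `parProd μ ν` is the product of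
the conditional suffix laws under `μ` and `ν`. Keeping the `Y`-part of the prefix fixed and
varying only the `X`-letter at position `i`, the common `ν`-factor is a probability vector and
integrates out of the total variation distance, so every η-term of `μ` is an η-term of the
product (and symmetrically for `ν`). -/

open Finset

section Sums

variable {α β X Y : Type*} [Fintype α] [Fintype β]

lemma Fintype.sum_fun_prod [DecidableEq α] [Fintype X] [Fintype Y] (f : (α → X × Y) → ℝ) :
    ∑ z, f z = ∑ a : α → X, ∑ b : α → Y, f (Function.prod a b) :=
  (Fintype.sum_equiv (Equiv.arrowProdEquivProdArrow α (fun _ => X) (fun _ => Y)) _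
    (fun p => f (Function.prod p.1 p.2)) fun _ => rfl).trans (Fintype.sum_prod_type _)

lemma sum_sum_abs_mul_sub_mul_right (p p' : α → ℝ) {q : β → ℝ} (hq : ∀ b, 0 ≤ q b)
    (hq₁ : ∑ b, q b = 1) :
    ∑ a, ∑ b, |p a * q b - p' a * q b| = ∑ a, |p a - p' a| := by
  refine sum_congr rfl fun a _ => ?_
  simp_rw [← sub_mul, abs_mul, abs_of_nonneg (hq _), ← mul_sum, hq₁, mul_one]

lemma sum_sum_abs_mul_sub_mul_left {q : α → ℝ} (hq : ∀ a, 0 ≤ q a) (hq₁ : ∑ a, q a = 1)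
    (p p' : β → ℝ) :
    ∑ a, ∑ b, |q a * p b - q a * p' b| = ∑ b, |p b - p' b| := by
  rw [sum_comm, ← sum_sum_abs_mul_sub_mul_right p p' hq hq₁]
  simp_rw [mul_comm (q _)]

end Sums

lemma IsProbMeas.nonempty {α : Type*} [Fintype α] {μ : α → ℝ} (hμ : IsProbMeas μ) :
    Nonempty α := by
  by_contra h
  rw [not_nonempty_iff] at h
  simpa using hμ.2

section Conditional

variable {n : ℕ} {Ω : Type*} [Fintype Ω] [DecidableEq Ω]

lemma prefProb_pos {μ : (Fin n → Ω) → ℝ} (hμ : ∀ x, 0 < μ x) (i : ℕ) (z : Fin n → Ω) :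
    0 < prefProb μ i z :=
  sum_pos' (fun x _ => by split_ifs; exacts [(hμ x).le, le_rfl]) ⟨z, mem_univ z, by simp [hμ z]⟩

lemma condSuffix_nonneg {μ : (Fin n → Ω) → ℝ} (hμ : ∀ x, 0 ≤ μ x) (i j : ℕ) (z : Fin n → Ω)
    (s : {t : Fin n // j ≤ (t : ℕ) + 1} → Ω) : 0 ≤ condSuffix μ i j z s :=
  div_nonneg (sum_nonneg fun x _ => by split_ifs; exacts [hμ x, le_rfl])
    (sum_nonneg fun x _ => by split_ifs; exacts [hμ x, le_rfl])

lemma sum_condSuffix {μ : (Fin n → Ω) → ℝ} {i : ℕ} {z : Fin n → Ω} (hz : prefProb μ i z ≠ 0)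
    (j : ℕ) : ∑ s, condSuffix μ i j z s = 1 := by
  simp only [condSuffix]
  rw [← sum_div, sum_comm, div_eq_one_iff_eq hz]
  refine sum_congr rfl fun x _ => ?_
  simp [ite_and, ← funext_iff]

lemma eta_le_etaBar (μ : (Fin n → Ω) → ℝ) (i j : ℕ) (y : Fin n → Ω) (w w' : Ω) :
    eta μ i j y w w' ≤ etaBar μ i j :=
  le_ciSup_of_le (Finite.bddAbove_range _) y <|
    le_ciSup_of_le (Finite.bddAbove_range _) w <| le_ciSup (Finite.bddAbove_range _) w'

lemma etaBar_le_of_forall_eta_le [Nonempty Ω] {μ : (Fin n → Ω) → ℝ} {i j : ℕ} {C : ℝ}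
    (h : ∀ y w w', eta μ i j y w w' ≤ C) : etaBar μ i j ≤ C :=
  ciSup_le fun y => ciSup_le fun w => ciSup_le fun w' => h y w w'

end Conditional

lemma setCoord_prod {n : ℕ} {X Y : Type*} (a : Fin n → X) (b : Fin n → Y) (i : ℕ)
    (w : X) (c : Y) :
    setCoord (Function.prod a b) i (w, c) = Function.prod (setCoord a i w) (setCoord b i c) := by
  funext t
  simp only [setCoord, Function.prod_apply]
  split_ifs <;> rfl

section ParProd

variable {n : ℕ} {X Y : Type*} [Fintype X] [Fintype Y] (μ : (Fin n → X) → ℝ)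
  (ν : (Fin n → Y) → ℝ)

lemma sum_ite_parProd {P : (Fin n → X) → Prop} {Q : (Fin n → Y) → Prop}
    {R : (Fin n → X × Y) → Prop} [DecidablePred P] [DecidablePred Q] [DecidablePred R]
    (hR : ∀ a b, R (Function.prod a b) ↔ P a ∧ Q b) :
    ∑ z, (if R z then parProd μ ν z else 0)
      = (∑ a, if P a then μ a else 0) * ∑ b, if Q b then ν b else 0 := by
  rw [Fintype.sum_fun_prod, sum_mul_sum]
  refine sum_congr rfl fun a _ => sum_congr rfl fun b _ => ?_
  rw [ite_zero_mul_ite_zero, if_congr (hR a b) rfl rfl]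
  rfl

variable [DecidableEq X] [DecidableEq Y]

lemma prefProb_parProd (i : ℕ) (a : Fin n → X) (b : Fin n → Y) :
    prefProb (parProd μ ν) i (Function.prod a b) = prefProb μ i a * prefProb ν i b :=
  sum_ite_parProd μ ν fun a' b' => by simp [Prod.ext_iff, forall_and]

lemma condSuffix_parProd (i j : ℕ) (a : Fin n → X) (b : Fin n → Y)
    (s : {t : Fin n // j ≤ (t : ℕ) + 1} → X × Y) :
    condSuffix (parProd μ ν) i j (Function.prod a b) s
      = condSuffix μ i j a (Prod.fst ∘ s) * condSuffix ν i j b (Prod.snd ∘ s) := by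
  rw [condSuffix, condSuffix, condSuffix, prefProb_parProd, div_mul_div_comm]
  congr 1
  exact sum_ite_parProd μ ν fun a' b' => by simp [Prod.ext_iff, forall_and, and_and_and_comm]

lemma eta_parProd_fst {ν : (Fin n → Y) → ℝ} (hν : ∀ y, 0 < ν y) (i j : ℕ) (a : Fin n → X)
    (b : Fin n → Y) (w w' : X) (c : Y) :
    eta (parProd μ ν) i j (Function.prod a b) (w, c) (w', c) = eta μ i j a w w' := by
  rw [eta, eta, setCoord_prod, setCoord_prod, Fintype.sum_fun_prod]
  simp only [condSuffix_parProd, Function.fst_comp_prod, Function.snd_comp_prod]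
  rw [sum_sum_abs_mul_sub_mul_right _ _ (condSuffix_nonneg (fun y => (hν y).le) i j _)
    (sum_condSuffix (prefProb_pos hν i _).ne' j)]

lemma eta_parProd_snd {μ : (Fin n → X) → ℝ} (hμ : ∀ x, 0 < μ x) (i j : ℕ) (a : Fin n → X)
    (b : Fin n → Y) (c : X) (w w' : Y) :
    eta (parProd μ ν) i j (Function.prod a b) (c, w) (c, w') = eta ν i j b w w' := by
  rw [eta, eta, setCoord_prod, setCoord_prod, Fintype.sum_fun_prod]
  simp only [condSuffix_parProd, Function.fst_comp_prod, Function.snd_comp_prod]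
  rw [sum_sum_abs_mul_sub_mul_left (condSuffix_nonneg (fun x => (hμ x).le) i j _)
    (sum_condSuffix (prefProb_pos hμ i _).ne' j)]

lemma etaBar_le_etaBar_parProd_left [Nonempty X] [Nonempty Y] {ν : (Fin n → Y) → ℝ}
    (hν : ∀ y, 0 < ν y) (i j : ℕ) : etaBar μ i j ≤ etaBar (parProd μ ν) i j := by
  obtain ⟨c⟩ := ‹Nonempty Y›
  refine etaBar_le_of_forall_eta_le fun a w w' => ?_
  rw [← eta_parProd_fst μ hν i j a (fun _ => c) w w' c]
  exact eta_le_etaBar _ i j _ _ _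

lemma etaBar_le_etaBar_parProd_right [Nonempty X] [Nonempty Y] {μ : (Fin n → X) → ℝ}
    (hμ : ∀ x, 0 < μ x) (i j : ℕ) : etaBar ν i j ≤ etaBar (parProd μ ν) i j := by
  obtain ⟨c⟩ := ‹Nonempty X›
  refine etaBar_le_of_forall_eta_le fun b w w' => ?_
  rw [← eta_parProd_snd ν hμ i j (fun _ => c) b c w w']
  exact eta_le_etaBar _ i j _ _ _

end ParProd

theorem etaBar_parProd_lower_general {n : ℕ} {X Y : Type*} [Fintype X] [DecidableEq X]
    [Fintype Y] [DecidableEq Y]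
    (μ : (Fin n → X) → ℝ) (ν : (Fin n → Y) → ℝ)
    (hμ : IsProbMeas μ) (hν : IsProbMeas ν)
    (hμpos : ∀ x, 0 < μ x) (hνpos : ∀ y, 0 < ν y)
    (i j : ℕ) (hij : i < j) (hjn : j ≤ n) :
    max (etaBar μ i j) (etaBar ν i j) ≤ etaBar (parProd μ ν) i j := by
  have hn : 0 < n := by omega
  have : Nonempty X := ⟨hμ.nonempty.some ⟨0, hn⟩⟩
  have : Nonempty Y := ⟨hν.nonempty.some ⟨0, hn⟩⟩
  exact max_le (etaBar_le_etaBar_parProd_left μ hνpos i j)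
    (etaBar_le_etaBar_parProd_right ν hμpos i j)

/-- lower bound for the η-mixing coefficients of a parallel product. -/
theorem etaBar_parProd_lower {n : ℕ} {X Y : Type*} [Fintype X] [DecidableEq X]
    [Fintype Y] [DecidableEq Y]
    (μ : (Fin n → X) → ℝ) (ν : (Fin n → Y) → ℝ)
    (hμ : IsProbMeas μ) (hν : IsProbMeas ν)
    (hμpos : ∀ x, 0 < μ x) (hνpos : ∀ y, 0 < ν y)
    (i j : ℕ) (hi : 1 ≤ i) (hij : i < j) (hjn : j ≤ n) :
    max (etaBar μ i j) (etaBar ν i j) ≤ etaBar (parProd μ ν) i j :=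
  etaBar_parProd_lower_general μ ν hμ hν hμpos hνpos i j hij hjn
end

section
/- For probability measures p, p' on a finite set A and q, q' on a finite set B, the product measures satisfy ‖p⊗q − p'⊗q'‖_TV ≤ ‖p−p'‖_TV + ‖q−q'‖_TV − ‖p−p'‖_TV·‖q−q'‖_TV. -/
open scoped BigOperators

/-- tensorization of the total variation norm:
`‖p⊗q − p'⊗q'‖_TV ≤ ‖p−p'‖_TV + ‖q−q'‖_TV − ‖p−p'‖_TV·‖q−q'‖_TV`,
where `‖ν‖_TV = (1/2)∑|ν(x)|` and `(p⊗q)(a,b) = p(a)q(b)`. -/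
theorem tv_tensorization {A B : Type*} [Fintype A] [Fintype B]
    (p p' : A → ℝ) (q q' : B → ℝ)
    (hp : (∀ a, 0 ≤ p a) ∧ ∑ a, p a = 1) (hp' : (∀ a, 0 ≤ p' a) ∧ ∑ a, p' a = 1)
    (hq : (∀ b, 0 ≤ q b) ∧ ∑ b, q b = 1) (hq' : (∀ b, 0 ≤ q' b) ∧ ∑ b, q' b = 1) :
    (1 / 2) * ∑ z : A × B, |p z.1 * q z.2 - p' z.1 * q' z.2| ≤
      (1 / 2) * ∑ a : A, |p a - p' a| + (1 / 2) * ∑ b : B, |q b - q' b| -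
        ((1 / 2) * ∑ a : A, |p a - p' a|) * ((1 / 2) * ∑ b : B, |q b - q' b|) := by
  obtain ⟨hp0, hp1⟩ := hp
  obtain ⟨hp'0, hp'1⟩ := hp'
  obtain ⟨hq0, hq1⟩ := hq
  obtain ⟨hq'0, hq'1⟩ := hq'
  have habs : ∀ x y : ℝ, |x - y| = x + y - 2 * min x y := by
    intro x y
    rcases le_total x y with h | h
    · rw [abs_of_nonpos (by linarith), min_eq_left h]; ring
    · rw [abs_of_nonneg (by linarith), min_eq_right h]; ring
  have e1 : (1 / 2 : ℝ) * ∑ a : A, |p a - p' a| = 1 - ∑ a, min (p a) (p' a) := by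
    simp_rw [habs]
    rw [Finset.sum_sub_distrib, Finset.sum_add_distrib, ← Finset.mul_sum, hp1, hp'1]; ring
  have e2 : (1 / 2 : ℝ) * ∑ b : B, |q b - q' b| = 1 - ∑ b, min (q b) (q' b) := by
    simp_rw [habs]
    rw [Finset.sum_sub_distrib, Finset.sum_add_distrib, ← Finset.mul_sum, hq1, hq'1]; ring
  have hprod : ∑ z : A × B, p z.1 * q z.2 = 1 := by
    rw [Fintype.sum_prod_type]
    simp_rw [← Finset.mul_sum, hq1, mul_one, hp1]
  have hprod' : ∑ z : A × B, p' z.1 * q' z.2 = 1 := by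
    rw [Fintype.sum_prod_type]
    simp_rw [← Finset.mul_sum, hq'1, mul_one, hp'1]
  have e3 : (1 / 2 : ℝ) * ∑ z : A × B, |p z.1 * q z.2 - p' z.1 * q' z.2| =
      1 - ∑ z : A × B, min (p z.1 * q z.2) (p' z.1 * q' z.2) := by
    simp_rw [habs]
    rw [Finset.sum_sub_distrib, Finset.sum_add_distrib, ← Finset.mul_sum, hprod, hprod']; ring
  have key : (∑ a, min (p a) (p' a)) * (∑ b, min (q b) (q' b)) ≤
      ∑ z : A × B, min (p z.1 * q z.2) (p' z.1 * q' z.2) := by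
    rw [Fintype.sum_prod_type, Finset.sum_mul_sum]
    apply Finset.sum_le_sum
    intro a _
    apply Finset.sum_le_sum
    intro b _
    exact le_min (mul_le_mul (min_le_left _ _) (min_le_left _ _)
        (le_min (hq0 b) (hq'0 b)) (hp0 a))
      (mul_le_mul (min_le_right _ _) (min_le_right _ _)
        (le_min (hq0 b) (hq'0 b)) (hp'0 a))
  rw [e1, e2, e3]
  nlinarith [key]
end
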